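/- arXiv:1208.2319 — 2 statements merged into one kernel-verified Lean document; each statement's English description precedes it below -/
import Mathlib

section
/- Let f : X → Y be a compact-preserving function from a sequentially Hausdorff strong Fréchet space X to a Hausdorff space Y. Then the restriction of f to the set LI_f of points at which f is locally infinite is continuous. -/
open Filter Topology Set

def CompactPreserving {X Y : Type*} [TopologicalSpace X] [TopologicalSpace Y]
    (f : X → Y) : Prop := ∀ K : Set X, IsCompact K → IsCompact (f '' K)

def LIset {X Y : Type*} [TopologicalSpace X] (f : X → Y) : Set X :=
  {x | ∀ U ∈ 𝓝 x, (f '' U).Infinite}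

def SeqHausdorff (X : Type*) [TopologicalSpace X] : Prop :=
  ∀ (u : ℕ → X) (a b : X), Filter.Tendsto u Filter.atTop (𝓝 a) →
    Filter.Tendsto u Filter.atTop (𝓝 b) → a = b

def StrongFrechet (X : Type*) [TopologicalSpace X] : Prop :=
  ∀ (A : ℕ → Set X), (∀ n, A (n + 1) ⊆ A n) → ∀ a : X, (∀ n, a ∈ closure (A n)) →
    ∃ u : ℕ → X, (∀ n, u n ∈ A n) ∧ Filter.Tendsto u Filter.atTop (𝓝 a)

/-!
If `f` is compact-preserving with Hausdorff codomain, `v n → p` and the values `f (v n)` are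
pairwise distinct, then `f (v n) → f p`: the images of the compact tails `{p} ∪ {v n | n ≥ M}`
are compact sets decreasing to `{f p}`. Every sequence of values has a constant or an injective
subsequence, so a sequence `x n → a` whose values avoid a neighbourhood of `f a` has a constant
value `c ≠ f a` along a subsequence. Points of local infiniteness are limits of sequences with
distinct values, which then converge to `c` at the `x n`. So `a` is a limit of points with
values near `c` outside any given finite set, and `f` takes infinitely many values near `c`
constantly along sequences converging to `a`. The strong Fréchet property diagonalises over
these into a single sequence converging to `a` with distinct values near `c`, contradicting the
first observation.
-/

open Function

section Subsequences

variable {Y : Type*} {g : ℕ → Y}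

lemma exists_injective_subseq_of_infinite_range (h : (range g).Infinite) :
    ∃ φ : ℕ → ℕ, Tendsto φ atTop atTop ∧ Injective (g ∘ φ) := by
  let e := h.natEmbedding
  choose φ hφ using fun n => (e n).2
  have hinj : Injective (g ∘ φ) := by
    intro m n hmn
    exact e.injective (Subtype.val_injective (by simpa only [comp_apply, hφ] using hmn))
  exact ⟨φ, hinj.of_comp.nat_tendsto_atTop, hinj⟩

lemma exists_const_subseq_of_finite_range (h : (range g).Finite) :
    ∃ φ : ℕ → ℕ, Tendsto φ atTop atTop ∧ ∃ c, ∀ n, g (φ n) = c := by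
  have := h.to_subtype
  obtain ⟨y, hy⟩ := Finite.exists_infinite_fiber (rangeFactorization g)
  obtain ⟨φ, hφ, hφy⟩ := extraction_of_frequently_atTop
    (Nat.frequently_atTop_iff_infinite.2 (infinite_coe_iff.1 hy))
  exact ⟨φ, hφ.tendsto_atTop, y, fun n => congrArg Subtype.val (hφy n)⟩

end Subsequences

section

variable {X Y : Type*} [TopologicalSpace X]

def constSeqValues (f : X → Y) (p : X) : Set Y :=
  {d | ∃ t : ℕ → X, Tendsto t atTop (𝓝 p) ∧ ∀ n, f (t n) = d}

lemma mem_closure_preimage_compl_of_mem_LIset {f : X → Y} {p : X} (hp : p ∈ LIset f)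
    {F : Set Y} (hF : F.Finite) : p ∈ closure (f ⁻¹' Fᶜ) := by
  refine mem_closure_iff_nhds.2 fun U hU => ?_
  obtain ⟨_, ⟨z, hz, rfl⟩, hzF⟩ := not_subset.1 fun h => hp U hU (hF.subset h)
  exact ⟨z, hz, hzF⟩

namespace StrongFrechet

lemma frechetUrysohnSpace (hX : StrongFrechet X) : FrechetUrysohnSpace X :=
  ⟨fun s a ha => hX (fun _ => s) (fun _ => subset_rfl) a (fun _ => ha)⟩

lemma exists_tendsto_injective_of_infinite (hX : StrongFrechet X) {f : X → Y} {p : X}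
    {S : Set Y} (hS : (S ∩ constSeqValues f p).Infinite) :
    ∃ u : ℕ → X, Tendsto u atTop (𝓝 p) ∧ (∀ n, f (u n) ∈ S) ∧ Injective (f ∘ u) := by
  let d := hS.natEmbedding
  let A : ℕ → Set X := fun r => f ⁻¹' ((fun n => (d n : Y)) '' Ici r)
  have hA_anti : ∀ r, A (r + 1) ⊆ A r :=
    fun r => preimage_mono (image_mono (Ici_subset_Ici.2 r.le_succ))
  have hA_closure : ∀ r, p ∈ closure (A r) := fun r => by
    obtain ⟨t, ht, htd⟩ := (d r).2.2
    exact mem_closure_of_tendsto ht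
      (Eventually.of_forall fun m => ⟨r, self_mem_Ici, (htd m).symm⟩)
  obtain ⟨u, huA, hu⟩ := hX A hA_anti p hA_closure
  choose n hn hfu using huA
  have hfu' : f ∘ u = (fun k => (d k : Y)) ∘ n := funext fun r => (hfu r).symm
  have hrange : (range (f ∘ u)).Infinite := by
    rw [hfu', range_comp]
    refine (infinite_of_not_bddAbove fun ⟨B, hB⟩ => ?_).image
      (Subtype.val_injective.comp d.injective).injOn
    exact absurd (hB ⟨B + 1, rfl⟩) (Nat.not_le.2 (hn (B + 1)))
  obtain ⟨φ, hφ, hinj⟩ := exists_injective_subseq_of_infinite_range hrange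
  exact ⟨u ∘ φ, hu.comp hφ, fun m => hfu (φ m) ▸ (d _).2.1, hinj⟩

lemma exists_tendsto_injective_of_mem_LIset (hX : StrongFrechet X) {f : X → Y} {p : X}
    (hp : p ∈ LIset f) : ∃ v : ℕ → X, Tendsto v atTop (𝓝 p) ∧ Injective (f ∘ v) := by
  by_cases hD : (constSeqValues f p).Infinite
  · obtain ⟨v, hv, -, hinj⟩ := hX.exists_tendsto_injective_of_infinite (S := univ)
      (by rwa [univ_inter])
    exact ⟨v, hv, hinj⟩
  have := hX.frechetUrysohnSpace
  -- a sequence avoiding the finitely many values of `constSeqValues f p` has no constant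
  -- subsequence
  obtain ⟨s, hsD, hs⟩ := mem_closure_iff_seq_limit.1
    (mem_closure_preimage_compl_of_mem_LIset hp (not_infinite.1 hD))
  by_cases hrange : (range (f ∘ s)).Infinite
  · obtain ⟨φ, hφ, hinj⟩ := exists_injective_subseq_of_infinite_range hrange
    exact ⟨s ∘ φ, hs.comp hφ, hinj⟩
  · obtain ⟨φ, hφ, c, hc⟩ := exists_const_subseq_of_finite_range (not_infinite.1 hrange)
    exact (hsD (φ 0) ⟨s ∘ φ, hs.comp hφ, fun n => (hc n).trans (hc 0).symm⟩).elim

end StrongFrechet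

namespace CompactPreserving

variable [TopologicalSpace Y] [T2Space Y] {f : X → Y}

lemma tendsto_comp_of_injective (hf : CompactPreserving f) {v : ℕ → X} {p : X}
    (hv : Tendsto v atTop (𝓝 p)) (hinj : Injective (f ∘ v)) :
    Tendsto (f ∘ v) atTop (𝓝 (f p)) := by
  let T : ℕ → Set Y := fun M => f '' insert p (range fun n => v (n + M))
  have hT_anti : Antitone T := by
    intro M N hMN
    refine image_mono (insert_subset_insert ?_)
    rintro _ ⟨n, rfl⟩
    exact ⟨n + (N - M), by simp only; congr 1; omega⟩
  have hT_compact : ∀ M, IsCompact (T M) :=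
    fun M => hf _ (hv.comp (tendsto_add_atTop_nat M)).isCompact_insert_range
  have hT_inter : ⋂ M, T M ⊆ {f p} := by
    intro y hy
    rw [mem_iInter] at hy
    by_contra hne
    obtain ⟨_, rfl | ⟨k, rfl⟩, rfl⟩ := hy 0
    · exact hne rfl
    obtain ⟨_, rfl | ⟨n, rfl⟩, hn⟩ := hy (k + 1)
    · exact hne hn.symm
    · have := hinj hn
      omega
  intro U hU
  obtain ⟨M, hM⟩ := exists_subset_nhds_of_isCompact hT_anti.directed_ge hT_compact
    fun y hy => by rwa [hT_inter hy]
  rw [mem_map]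
  filter_upwards [eventually_ge_atTop M] with n hn
  exact hM ⟨v n, mem_insert_of_mem _ ⟨n - M, by simp only [Nat.sub_add_cancel hn]⟩, rfl⟩

lemma exists_const_subseq (hf : CompactPreserving f) {u : ℕ → X} {p : X}
    (hu : Tendsto u atTop (𝓝 p)) {V : Set Y} (hV : V ∈ 𝓝 (f p)) (huV : ∀ n, f (u n) ∉ V) :
    ∃ φ : ℕ → ℕ, Tendsto φ atTop atTop ∧ ∃ c, ∀ n, f (u (φ n)) = c := by
  by_cases hrange : (range (f ∘ u)).Finite
  · exact exists_const_subseq_of_finite_range hrange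
  obtain ⟨φ, hφ, hinj⟩ := exists_injective_subseq_of_infinite_range hrange
  obtain ⟨n, hn⟩ := ((hf.tendsto_comp_of_injective (hu.comp hφ) hinj).eventually hV).exists
  exact (huV (φ n) hn).elim

lemma mem_closure_preimage_diff (hf : CompactPreserving f) (hX : StrongFrechet X) {x : X}
    (hx : x ∈ LIset f) {W : Set Y} (hW : W ∈ 𝓝 (f x)) {E : Set Y} (hE : E.Finite) :
    x ∈ closure (f ⁻¹' (W \ E)) := by
  obtain ⟨v, hv, hinj⟩ := hX.exists_tendsto_injective_of_mem_LIset hx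
  have hvW : ∀ᶠ m in atTop, f (v m) ∈ W := hf.tendsto_comp_of_injective hv hinj hW
  have hvE : ∀ᶠ m in atTop, f (v m) ∉ E := by
    rw [← Nat.cofinite_eq_atTop]
    exact (hE.preimage hinj.injOn).eventually_cofinite_notMem
  exact mem_closure_of_tendsto hv (hvW.and hvE)

lemma exists_apply_mem_of_tendsto_of_mem_LIset (hf : CompactPreserving f)
    (hX : StrongFrechet X) {x : ℕ → X} (hx : ∀ n, x n ∈ LIset f) {a : X}
    (hxa : Tendsto x atTop (𝓝 a)) {V : Set Y} (hV : V ∈ 𝓝 (f a)) : ∃ n, f (x n) ∈ V := by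
  by_contra! hxV
  obtain ⟨φ, hφ, c, hc⟩ := hf.exists_const_subseq hxa hV hxV
  have hac : f a ≠ c := fun h => hxV (φ 0) (hc 0 ▸ h ▸ mem_of_mem_nhds hV)
  obtain ⟨V₁, W, hV₁, hW, hV₁W⟩ := t2_separation_nhds hac
  have hE : (W ∩ constSeqValues f a).Infinite := by
    intro hE
    have := hX.frechetUrysohnSpace
    have ha : a ∈ closure (f ⁻¹' (W \ (W ∩ constSeqValues f a))) :=
      isClosed_closure.mem_of_tendsto (hxa.comp hφ) (Eventually.of_forall fun n =>
        hf.mem_closure_preimage_diff hX (hx _) ((hc n).symm ▸ hW) hE)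
    obtain ⟨u, huE, hu⟩ := mem_closure_iff_seq_limit.1 ha
    obtain ⟨ψ, hψ, d, hd⟩ :=
      hf.exists_const_subseq hu hV₁ fun n hn => disjoint_left.1 hV₁W hn (huE n).1
    exact (huE (ψ 0)).2
      ⟨(huE (ψ 0)).1, u ∘ ψ, hu.comp hψ, fun n => (hd n).trans (hd 0).symm⟩
  obtain ⟨u, hu, huW, hinj⟩ := hX.exists_tendsto_injective_of_infinite hE
  obtain ⟨n, hn⟩ := ((hf.tendsto_comp_of_injective hu hinj).eventually hV₁).exists
  exact disjoint_left.1 hV₁W hn (huW n)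

lemma tendsto_comp_of_forall_mem_LIset (hf : CompactPreserving f) (hX : StrongFrechet X)
    {x : ℕ → X} (hx : ∀ n, x n ∈ LIset f) {a : X} (hxa : Tendsto x atTop (𝓝 a)) :
    Tendsto (f ∘ x) atTop (𝓝 (f a)) := by
  by_contra h
  obtain ⟨V, hV, hfreq⟩ := not_tendsto_iff_exists_frequently_notMem.1 h
  obtain ⟨φ, hφ, hφV⟩ := extraction_of_frequently_atTop hfreq
  obtain ⟨n, hn⟩ := hf.exists_apply_mem_of_tendsto_of_mem_LIset hX (fun n => hx (φ n))
    (hxa.comp hφ.tendsto_atTop) hV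
  exact hφV n hn

end CompactPreserving

end

theorem stmt10_general {X Y : Type*} [TopologicalSpace X] [TopologicalSpace Y] [T2Space Y]
    (hX2 : StrongFrechet X)
    (f : X → Y) (hf : CompactPreserving f) :
    Continuous (Set.restrict (LIset f) f) := by
  have := hX2.frechetUrysohnSpace
  refine continuous_iff_seqContinuous.2 fun {x a} hx => ?_
  exact hf.tendsto_comp_of_forall_mem_LIset hX2 (fun n => (x n).2)
    (continuous_subtype_val.seqContinuous hx)

theorem stmt10 {X Y : Type*} [TopologicalSpace X] [TopologicalSpace Y] [T2Space Y]
    (hX1 : SeqHausdorff X) (hX2 : StrongFrechet X)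
    (f : X → Y) (hf : CompactPreserving f) :
    Continuous (Set.restrict (LIset f) f) :=
  stmt10_general hX2 f hf
end

section
/- Let f : X → Y be a compact-preserving function from a topological space X to a Hausdorff space Y, let (x_n) be a sequence converging to x ∈ X with the values f(x_n) pairwise distinct. Then f(x) is the unique non-isolated point (accumulation point) of the compact set f({x} ∪ {x_n : n ∈ ℕ}). -/
open Filter Topology Set

section

variable {X Y ι : Type*} [TopologicalSpace X] [TopologicalSpace Y]

theorem Filter.Tendsto.isCompact_insert_image {u : ι → X} {x : X}
    (hu : Tendsto u cofinite (𝓝 x)) (s : Set ι) : IsCompact (insert x (u '' s)) := by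
  rw [← range_domRestrict]
  exact (hu.comp Subtype.val_injective.tendsto_cofinite).isCompact_insert_range_of_cofinite

namespace CompactPreserving

variable [T2Space Y] {f : X → Y} {u : ι → X} {x : X}

theorem eq_of_mem_closure_image_insert_range_diff (hf : CompactPreserving f)
    (hu : Tendsto u cofinite (𝓝 x)) (hinj : (f ∘ u).Injective) {y : Y}
    (hy : y ∈ f '' insert x (range u)) (hacc : y ∈ closure (f '' insert x (range u) \ {y})) :
    y = f x := by
  by_contra hne
  obtain ⟨_, rfl | ⟨i, rfl⟩, rfl⟩ := hy
  · exact hne rfl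
  have hclosed : IsClosed (f '' insert x (u '' {i}ᶜ)) :=
    (hf _ (hu.isCompact_insert_image _)).isClosed
  have hsub : f '' insert x (range u) \ {f (u i)} ⊆ f '' insert x (u '' {i}ᶜ) := by
    rintro _ ⟨⟨_, rfl | ⟨j, rfl⟩, rfl⟩, hj⟩
    · exact mem_image_of_mem f (mem_insert _ _)
    · exact mem_image_of_mem f (mem_insert_of_mem _ (mem_image_of_mem u fun hji => hj (hji ▸ rfl)))
  obtain ⟨_, rfl | ⟨j, hji, rfl⟩, hfj⟩ := hclosed.closure_subset_iff.mpr hsub hacc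
  · exact hne hfj.symm
  · exact hji (hinj hfj)

theorem mem_closure_image_insert_range_diff [Infinite ι] (hf : CompactPreserving f)
    (hu : Tendsto u cofinite (𝓝 x)) (hinj : (f ∘ u).Injective) :
    f x ∈ closure (f '' insert x (range u) \ {f x}) := by
  have hsub : range (f ∘ u) ⊆ f '' insert x (range u) := by
    rw [range_comp]
    exact image_mono (subset_insert _ _)
  obtain ⟨y, hy, hyacc⟩ := (infinite_range_of_injective hinj).exists_accPt_of_subset_isCompact
    (hf _ hu.isCompact_insert_range_of_cofinite) hsub
  have hacc : y ∈ closure (f '' insert x (range u) \ {y}) := by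
    rw [mem_closure_iff_clusterPt, ← accPt_principal_iff_clusterPt]
    exact hyacc.mono (principal_mono.mpr hsub)
  rwa [eq_of_mem_closure_image_insert_range_diff hf hu hinj hy hacc] at hacc

end CompactPreserving

end

theorem stmt15 {X Y : Type*} [TopologicalSpace X] [TopologicalSpace Y] [T2Space Y]
    (f : X → Y) (hf : CompactPreserving f) (u : ℕ → X) (x : X)
    (hu : Filter.Tendsto u Filter.atTop (𝓝 x))
    (hinj : ∀ n m : ℕ, n ≠ m → f (u n) ≠ f (u m)) :
    IsCompact (f '' (insert x (Set.range u))) ∧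
    f x ∈ f '' (insert x (Set.range u)) ∧
    ∀ y ∈ f '' (insert x (Set.range u)),
      (y ∈ closure (f '' (insert x (Set.range u)) \ {y}) ↔ y = f x) := by
  rw [← Nat.cofinite_eq_atTop] at hu
  have hinj' : (f ∘ u).Injective := fun n m h => by_contra fun hne => hinj n m hne h
  refine ⟨hf _ hu.isCompact_insert_range_of_cofinite, mem_image_of_mem f (mem_insert x _),
    fun y hy => ⟨hf.eq_of_mem_closure_image_insert_range_diff hu hinj' hy, ?_⟩⟩
  rintro rfl
  exact hf.mem_closure_image_insert_range_diff hu hinj'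
end
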